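/- arXiv:math/0409173 — 4 statements merged into one kernel-verified Lean document; each statement's English description precedes it below -/
import Mathlib

section
/- Let k be a perfect field, K a finite Galois extension of k with Galois group Γ = Gal(K/k), and F/K an algebraic function field of one variable with full constant field K, viewed as an extension of k(x) for some x ∈ F transcendental over K. Assume the extension F/k(x) is Galois with Galois group 𝒢, and let G = Gal(F/K(x)), so that Γ ≅ 𝒢/G. If 𝒢 is the semidirect product G ⋊ Γ, i.e. the exact sequence 1 → G → 𝒢 → Γ → 1 admits a group-theoretic section s : Γ → 𝒢, then the descent of the definition field of F from K to k is possible; moreover the fixed field F' = F^{s(Γ)} is a finite extension of k(x) with full constant field k satisfying F ≅ F' ⊗_k K as k-algebras. -/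
/-!
Let `F' = F^{s(Γ)}`. Since `s σ` acts on `K` as `σ`, the section `s` is injective, so
`[F : F'] = |Γ| = [K : k]`. An element of `Gal(F/k(x))` fixing both `F'` and `K` lies in `s(Γ)`
and acts trivially on `K`, hence is the identity; by the Galois correspondence `F'K = F`.
The multiplication map `F' ⊗_k K → F` is therefore a surjection of `F'`-spaces of the same
dimension `[K : k]`, i.e. an isomorphism. Finally, an element of `F'` algebraic over `k` is a
constant of `F`, so lies in `K`, and being `Γ`-invariant it lies in `k`.
-/

open IntermediateField

theorem IntermediateField.finiteDimensional_adjoin_of_finiteDimensional_adjoin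
    {k K F : Type*} [Field k] [Field K] [Field F] [Algebra k K] [Algebra k F] [Algebra K F]
    [IsScalarTower k K F] [FiniteDimensional k K] (S : Set F)
    [FiniteDimensional (adjoin K S) F] : FiniteDimensional (adjoin k S) F := by
  let K' := (IsScalarTower.toAlgHom k K F).fieldRange
  have hK : (adjoin K S).restrictScalars k = adjoin k (K' ∪ S) := by
    rw [restrictScalars_adjoin_of_algEquiv (IsScalarTower.toAlgHom k K F).equivFieldRange rfl,
      restrictScalars_adjoin]
  have hle : adjoin k S ≤ (adjoin K S).restrictScalars k :=
    hK ▸ adjoin.mono k _ _ Set.subset_union_right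
  have hext : extendScalars hle = adjoin (adjoin k S) K' := restrictScalars_injective k <| by
    rw [extendScalars_restrictScalars, adjoin_adjoin_left, hK, Set.union_comm]
  have : FiniteDimensional k K' :=
    (IsScalarTower.toAlgHom k K F).equivFieldRange.toLinearEquiv.finiteDimensional
  have : FiniteDimensional (adjoin k S) (extendScalars hle) := by
    rw [hext]
    exact Module.rank_lt_aleph0_iff.mp <|
      (adjoin_rank_le_of_isAlgebraic_right _ K').trans_lt (Module.rank_lt_aleph0 k K')
  have : FiniteDimensional (extendScalars hle) F := ‹FiniteDimensional (adjoin K S) F›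
  exact Module.Finite.trans (extendScalars hle) F

theorem IntermediateField.adjoin_fixedField_eq_top {M L : Type*} [Field M] [Field L]
    [Algebra M L] [FiniteDimensional M L] [IsGalois M L] (H : Subgroup (L ≃ₐ[M] L)) (S : Set L)
    (hS : ∀ σ ∈ H, (∀ y ∈ S, σ y = y) → σ = 1) : adjoin (fixedField H) S = ⊤ := by
  apply restrictScalars_injective M
  set E := (adjoin (fixedField H) S).restrictScalars M
  have hfix : E.fixingSubgroup = ⊥ := by
    refine (Subgroup.eq_bot_iff_forall _).mpr fun σ hσ ↦ ?_
    rw [mem_fixingSubgroup_iff] at hσ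
    have hσS : ∀ y ∈ S, σ y = y := fun y hy ↦
      hσ y ((mem_restrictScalars M).mpr (subset_adjoin (fixedField H) S hy))
    have hσH : σ ∈ H := by
      rw [← fixingSubgroup_fixedField H, mem_fixingSubgroup_iff]
      exact fun y hy ↦ hσ y
        ((mem_restrictScalars M).mpr (algebraMap_mem (adjoin (fixedField H) S) ⟨y, hy⟩))
    exact hS σ hσH hσS
  rw [restrictScalars_top, ← IsGalois.fixedField_fixingSubgroup E, hfix, fixedField_bot]

theorem Algebra.TensorProduct.bijective_lift_of_adjoin_eq_top {k K E F : Type*} [Field k]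
    [Field K] [Field E] [Field F] [Algebra k K] [Algebra k E] [Algebra k F] [Algebra K F]
    [Algebra E F] [IsScalarTower k K F] [IsScalarTower k E F] [FiniteDimensional k K]
    (hadj : IntermediateField.adjoin E (Set.range (algebraMap K F)) = ⊤)
    (hrank : Module.finrank E F = Module.finrank k K) :
    Function.Bijective (Algebra.TensorProduct.lift (Algebra.ofId E F)
      (IsScalarTower.toAlgHom k K F) fun _ _ ↦ Commute.all _ _) := by
  set Ψ := Algebra.TensorProduct.lift (Algebra.ofId E F) (IsScalarTower.toAlgHom k K F)
    fun _ _ ↦ Commute.all _ _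
  have hsurj : Function.Surjective Ψ := by
    have halg : ∀ y ∈ Set.range (algebraMap K F), IsAlgebraic E y := by
      rintro _ ⟨c, rfl⟩
      exact ((Algebra.IsIntegral.isIntegral (R := k) c).map
        (IsScalarTower.toAlgHom k K F)).tower_top.isAlgebraic
    have htop : Algebra.adjoin E (Set.range (algebraMap K F)) = ⊤ := by
      rw [← IntermediateField.adjoin_toSubalgebra_of_isAlgebraic halg, hadj,
        IntermediateField.top_toSubalgebra]
    rw [← AlgHom.range_eq_top, ← top_le_iff, ← htop, Algebra.adjoin_le_iff]
    rintro _ ⟨c, rfl⟩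
    exact ⟨1 ⊗ₜ c, by simp [Ψ]⟩
  have : FiniteDimensional E F := Module.finite_of_finrank_pos (hrank ▸ Module.finrank_pos)
  refine ⟨(LinearMap.injective_iff_surjective_of_finrank_eq_finrank ?_).mpr hsurj, hsurj⟩
  rw [Module.finrank_baseChange, hrank]

section GaloisSection

variable {k K F M : Type*} [Field k] [Field K] [Field F] [Field M] [Algebra k K] [Algebra K F]
  [Algebra M F] {s : (K ≃ₐ[k] K) →* (F ≃ₐ[M] F)}

theorem injective_of_map_algebraMap
    (hs : ∀ (σ : K ≃ₐ[k] K) (c : K), s σ (algebraMap K F c) = algebraMap K F (σ c)) :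
    Function.Injective s := by
  refine (injective_iff_map_eq_one s).mpr fun σ hσ ↦ AlgEquiv.ext fun c ↦ ?_
  have := hs σ c
  rw [hσ, AlgEquiv.one_apply] at this
  exact ((algebraMap K F).injective this).symm

theorem finrank_fixedField_range_eq_finrank [FiniteDimensional M F] [FiniteDimensional k K]
    [IsGalois k K]
    (hs : ∀ (σ : K ≃ₐ[k] K) (c : K), s σ (algebraMap K F c) = algebraMap K F (σ c)) :
    Module.finrank (fixedField s.range) F = Module.finrank k K := by
  rw [finrank_fixedField_eq_card, ← IsGalois.card_aut_eq_finrank k K]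
  exact Nat.card_congr (MonoidHom.ofInjective (injective_of_map_algebraMap hs)).toEquiv.symm

theorem adjoin_fixedField_range_eq_top [FiniteDimensional M F] [IsGalois M F]
    (hs : ∀ (σ : K ≃ₐ[k] K) (c : K), s σ (algebraMap K F c) = algebraMap K F (σ c)) :
    adjoin (fixedField s.range) (Set.range (algebraMap K F)) = ⊤ := by
  refine adjoin_fixedField_eq_top _ _ ?_
  rintro _ ⟨σ, rfl⟩ hσ
  suffices σ = 1 by rw [this, map_one]
  refine AlgEquiv.ext fun c ↦ (algebraMap K F).injective ?_
  rw [← hs, hσ _ ⟨c, rfl⟩, AlgEquiv.one_apply]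

theorem mem_range_algebraMap_of_mem_fixedField_range [Algebra k F] [IsScalarTower k K F]
    [FiniteDimensional k K] [IsGalois k K]
    (hs : ∀ (σ : K ≃ₐ[k] K) (c : K), s σ (algebraMap K F c) = algebraMap K F (σ c))
    {y : F} (hy : y ∈ fixedField s.range) (hyK : y ∈ Set.range (algebraMap K F)) :
    y ∈ Set.range (algebraMap k F) := by
  obtain ⟨c, rfl⟩ := hyK
  have hc : ∀ σ : K ≃ₐ[k] K, σ c = c := fun σ ↦
    (algebraMap K F).injective ((hs σ c).symm.trans (hy ⟨s σ, σ, rfl⟩))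
  obtain ⟨c₀, rfl⟩ := (IsGalois.mem_range_algebraMap_iff_fixed c).mpr hc
  exact ⟨c₀, IsScalarTower.algebraMap_apply k K F c₀⟩

end GaloisSection

theorem stmt_0_general
    (k K F : Type) [Field k] [Field K] [Field F]
    [Algebra k K] [Algebra k F] [Algebra K F] [IsScalarTower k K F]
    [FiniteDimensional k K] [IsGalois k K]
    (x : F)
    (hFfin : FiniteDimensional (↥(adjoin K {x})) F)
    (hconstF : ∀ y : F, IsAlgebraic K y → ∃ c : K, algebraMap K F c = y)
    [IsGalois (↥(adjoin k {x})) F]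
    (s : (K ≃ₐ[k] K) →* (F ≃ₐ[↥(adjoin k {x})] F))
    (hs : ∀ (σ : K ≃ₐ[k] K) (c : K), s σ (algebraMap K F c) = algebraMap K F (σ c)) :
    FiniteDimensional (↥(adjoin k {x})) (↥(fixedField (MonoidHom.range s))) ∧
    (∀ y : F, y ∈ fixedField (MonoidHom.range s) → IsAlgebraic k y →
      ∃ c : k, algebraMap k F c = y) ∧
    Nonempty (F ≃ₐ[k] TensorProduct k (↥(fixedField (MonoidHom.range s))) K) := by
  have : FiniteDimensional (adjoin k {x}) F :=
    finiteDimensional_adjoin_of_finiteDimensional_adjoin (K := K) {x}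
  refine ⟨inferInstance, fun y hy halg ↦ mem_range_algebraMap_of_mem_fixedField_range hs hy
    (hconstF y (halg.tower_top K)), ?_⟩
  have : IsScalarTower k (fixedField s.range) F := IsScalarTower.of_algebraMap_eq fun _ ↦ rfl
  have hΨ := Algebra.TensorProduct.bijective_lift_of_adjoin_eq_top
    (adjoin_fixedField_range_eq_top hs) (finrank_fixedField_range_eq_finrank hs)
  exact ⟨((AlgEquiv.ofBijective _ hΨ).restrictScalars k).symm⟩

/-- Let `k` be a perfect field, `K/k` a finite Galois extension with
Galois group `Γ = K ≃ₐ[k] K`, and `F/K` an algebraic function field of one variable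
(`x ∈ F` transcendental over `K`, `F/K(x)` finite) with full constant field `K`.
If `F/k(x)` is Galois and the restriction map `Gal(F/k(x)) → Γ` admits a group-theoretic
section `s` (i.e. `𝒢 = G ⋊ Γ`), then the fixed field `F' = F^{s(Γ)}` is a finite
extension of `k(x)` with full constant field `k` and `F ≅ F' ⊗_k K` as `k`-algebras. -/
theorem stmt_0
    (k K F : Type) [Field k] [Field K] [Field F]
    [Algebra k K] [Algebra k F] [Algebra K F] [IsScalarTower k K F]
    [PerfectField k] [FiniteDimensional k K] [IsGalois k K]
    (x : F) (hx : Transcendental K x)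
    (hFfin : FiniteDimensional (↥(adjoin K {x})) F)
    (hconstF : ∀ y : F, IsAlgebraic K y → ∃ c : K, algebraMap K F c = y)
    [IsGalois (↥(adjoin k {x})) F]
    (s : (K ≃ₐ[k] K) →* (F ≃ₐ[↥(adjoin k {x})] F))
    (hs : ∀ (σ : K ≃ₐ[k] K) (c : K), s σ (algebraMap K F c) = algebraMap K F (σ c)) :
    FiniteDimensional (↥(adjoin k {x})) (↥(fixedField (MonoidHom.range s))) ∧
    (∀ y : F, y ∈ fixedField (MonoidHom.range s) → IsAlgebraic k y →
      ∃ c : k, algebraMap k F c = y) ∧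
    Nonempty (F ≃ₐ[k] TensorProduct k (↥(fixedField (MonoidHom.range s))) K) :=
  stmt_0_general k K F x hFfin hconstF s hs
end

section
/- Let k be a perfect field, K a finite Galois extension of k, and F/K an algebraic function field of one variable with full constant field K, with x ∈ F transcendental over K. Suppose F/k(x) is an abelian Galois extension with Galois group 𝒢. If Γ = Gal(K/k) is cyclic of prime order p and G = Gal(F/K(x)) has order m with gcd(m, p) = 1, then the descent of the definition field of F from K to k is possible. -/
/-!
Restriction to `K` maps `Gal(F/k(x))` onto `Γ`, because the elements of `K` it fixes lie in
`K ∩ k(x) = k`. Its kernel is `Gal(F/K(x))`, of order `m` prime to `p = |Γ|`, so by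
Schur–Zassenhaus it has a complement `P ≅ Γ`. The fixed field `F'` of `P` has `[F : F'] = p`
and `F' ∩ K = k`. Since `p` is prime, `F'` and `K` generate `F`, so `F' ⊗_k K → F` is onto, hence
bijective as both sides have dimension `p` over `F'`. A constant of `F'` lies in `F' ∩ K = k`.
-/

open IntermediateField Polynomial

theorem Subgroup.exists_map_eq_top_and_card_eq_of_coprime {G H : Type*} [Group G] [Group H]
    [Finite G] {f : G →* H} (hf : Function.Surjective f)
    (hcop : (Nat.card f.ker).Coprime (Nat.card H)) :
    ∃ P : Subgroup G, P.map f = ⊤ ∧ Nat.card P = Nat.card H := by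
  have hindex : f.ker.index = Nat.card H := by
    rw [Subgroup.index_ker, MonoidHom.range_eq_top.mpr hf, Subgroup.card_top]
  obtain ⟨P, hP⟩ := Subgroup.exists_left_complement'_of_coprime (hindex ▸ hcop)
  refine ⟨P, ?_, hindex ▸ hP.index_eq_card.symm⟩
  rw [← Subgroup.map_top_of_surjective f hf, ← hP.sup_eq_top, Subgroup.map_sup,
    Subgroup.map_ker_self, sup_bot_eq]

namespace IntermediateField

section toSubfield

variable {K E F : Type*} [Field K] [Field E] [Field F] [Algebra K F] [Algebra E F]
  {L : IntermediateField K F} {M : IntermediateField E F}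

theorem finiteDimensional_of_toSubfield_le (h : L.toSubfield ≤ M.toSubfield)
    [FiniteDimensional L F] : FiniteDimensional M F := by
  let _ : Algebra L M := (Subfield.inclusion h).toAlgebra
  have : IsScalarTower L M F := .of_algebraMap_eq fun _ => rfl
  exact Module.Finite.of_restrictScalars_finite L M F

def algEquivMulEquivOfToSubfieldEq (h : L.toSubfield = M.toSubfield) :
    (F ≃ₐ[L] F) ≃* (F ≃ₐ[M] F) where
  toFun σ := { σ.toRingEquiv with commutes' := fun m => σ.commutes ⟨m, h.ge m.2⟩ }
  invFun σ := { σ.toRingEquiv with commutes' := fun l => σ.commutes ⟨l, h.le l.2⟩ }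
  left_inv _ := rfl
  right_inv _ := rfl
  map_mul' _ _ := rfl

end toSubfield

instance {k F : Type*} [Field k] [Field F] [Algebra k F] (E : IntermediateField k F)
    (A : IntermediateField E F) : IsScalarTower k A F :=
  .of_algebraMap_eq fun _ => rfl

section constants

variable {k K F : Type*} [Field k] [Field K] [Field F]
  [Algebra k K] [Algebra k F] [Algebra K F] [IsScalarTower k K F]

theorem mem_range_algebraMap_of_algebraMap_mem_adjoin_simple {x : F}
    (hx : Transcendental K x) {c : K} (h : algebraMap K F c ∈ k⟮x⟯) :
    c ∈ (algebraMap k K).range := by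
  obtain ⟨r, s, hrs⟩ := (mem_adjoin_simple_iff k _).mp h
  rcases eq_or_ne s 0 with rfl | hs
  · rw [map_zero, div_zero, map_eq_zero_iff _ (algebraMap K F).injective] at hrs
    exact hrs ▸ zero_mem _
  have hinj : Function.Injective (aeval (R := K) x) := transcendental_iff_injective.mp hx
  have hsx : aeval x s ≠ 0 := by
    rw [← aeval_map_algebraMap K, ← map_zero (aeval (R := K) x)]
    exact hinj.ne ((Polynomial.map_ne_zero_iff (algebraMap k K).injective).mpr hs)
  -- `c = r(x) / s(x)` forces `c * s = r` in `K[X]`, so `c` is a quotient of coefficients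
  have hpoly : C c * s.map (algebraMap k K) = r.map (algebraMap k K) := hinj (by
    rw [map_mul, aeval_C, aeval_map_algebraMap, aeval_map_algebraMap, hrs, div_mul_cancel₀ _ hsx])
  obtain ⟨i, hi⟩ : ∃ i, s.coeff i ≠ 0 := by simpa [Polynomial.ext_iff] using hs
  have hci := congrArg (coeff · i) hpoly
  simp only [coeff_C_mul, coeff_map] at hci
  refine ⟨r.coeff i / s.coeff i, ?_⟩
  rw [map_div₀, ← hci, mul_div_cancel_right₀ _ ((_root_.map_ne_zero _).mpr hi)]

theorem adjoin_adjoin_range_algebraMap_toSubfield (S : Set F) :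
    (adjoin (adjoin k S) (Set.range (algebraMap K F))).toSubfield = (adjoin K S).toSubfield := by
  apply le_antisymm
  · refine adjoin_le_subfield _ _ ?_ (by rintro _ ⟨c, rfl⟩; exact (adjoin K S).algebraMap_mem c)
    rintro _ ⟨⟨z, hz⟩, rfl⟩
    exact (adjoin_le_iff.mpr (subset_adjoin K S) : adjoin k S ≤ (adjoin K S).restrictScalars k) hz
  · refine adjoin_le_subfield _ _ (by rintro _ ⟨c, rfl⟩; exact subset_adjoin _ _ ⟨c, rfl⟩) ?_
    exact fun s hs => algebraMap_mem _ (⟨s, subset_adjoin k S hs⟩ : adjoin k S)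

theorem finiteDimensional_adjoin_of_finiteDimensional_adjoin_s1 [FiniteDimensional k K]
    (S : Set F) [FiniteDimensional (adjoin K S) F] : FiniteDimensional (adjoin k S) F := by
  set W := adjoin (adjoin k S) (Set.range (algebraMap K F))
  have : Module.Finite (adjoin k S) W := by
    let ι := IsScalarTower.toAlgHom k K F
    have : FiniteDimensional k ι.fieldRange :=
      (AlgEquiv.ofInjectiveField ι).toLinearEquiv.finiteDimensional
    have hW : W = adjoin (adjoin k S) (ι.fieldRange : Set F) := by
      rw [AlgHom.coe_fieldRange]; rfl
    rw [← Module.rank_lt_aleph0_iff, hW]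
    exact (adjoin_rank_le_of_isAlgebraic_right _ _).trans_lt (Module.rank_lt_aleph0 _ _)
  have : FiniteDimensional W F :=
    finiteDimensional_of_toSubfield_le (adjoin_adjoin_range_algebraMap_toSubfield S).ge
  exact Module.Finite.trans W F

end constants

section restrictNormalHom

variable {k F : Type*} (K : Type*) [Field k] [Field K] [Field F]
  [Algebra k K] [Algebra k F] [Algebra K F] [IsScalarTower k K F]
  (E : IntermediateField k F) [Normal k K]

noncomputable def restrictNormalHom : (F ≃ₐ[E] F) →* (K ≃ₐ[k] K) :=
  (AlgEquiv.restrictNormalHom K).comp (AlgEquiv.restrictScalarsHom k)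

variable {K}

theorem algebraMap_restrictNormalHom_apply (σ : F ≃ₐ[E] F) (c : K) :
    algebraMap K F (E.restrictNormalHom K σ c) = σ (algebraMap K F c) :=
  AlgEquiv.restrictNormal_commutes _ K c

theorem restrictNormalHom_apply_eq_self_iff (σ : F ≃ₐ[E] F) (c : K) :
    E.restrictNormalHom K σ c = c ↔ σ (algebraMap K F c) = algebraMap K F c := by
  rw [← (algebraMap K F).injective.eq_iff, algebraMap_restrictNormalHom_apply]

theorem ker_restrictNormalHom :
    (E.restrictNormalHom K).ker = (adjoin E (Set.range (algebraMap K F))).fixingSubgroup := by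
  ext σ
  simp only [MonoidHom.mem_ker, AlgEquiv.ext_iff, AlgEquiv.one_apply,
    restrictNormalHom_apply_eq_self_iff, mem_fixingSubgroup_iff]
  refine ⟨fun h z hz => ?_, fun h c => h _ (subset_adjoin _ _ ⟨c, rfl⟩)⟩
  refine adjoin_le_subfield E _ (K := RingHom.eqLocusField σ.toRingHom (RingHom.id F)) ?_ ?_ hz
  · rintro _ ⟨e, rfl⟩
    exact σ.commutes e
  · rintro _ ⟨c, rfl⟩
    exact h c

theorem card_ker_restrictNormalHom (S : Set F) :
    Nat.card ((adjoin k S).restrictNormalHom K).ker = Nat.card (F ≃ₐ[adjoin K S] F) := by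
  rw [ker_restrictNormalHom]
  exact Nat.card_congr ((fixingSubgroupEquiv _).trans (algEquivMulEquivOfToSubfieldEq
    (adjoin_adjoin_range_algebraMap_toSubfield (k := k) (K := K) S))).toEquiv

theorem map_restrictNormalHom_eq_top_iff [IsGalois k K] [FiniteDimensional k K]
    (P : Subgroup (F ≃ₐ[E] F)) :
    P.map (E.restrictNormalHom K) = ⊤ ↔
      ∀ c : K, algebraMap K F c ∈ fixedField P → c ∈ (algebraMap k K).range := by
  have hfixed : ∀ c : K, c ∈ fixedField (P.map (E.restrictNormalHom K)) ↔
      algebraMap K F c ∈ fixedField P := by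
    intro c
    simp only [mem_fixedField_iff, Subgroup.mem_map, forall_exists_index, and_imp,
      forall_apply_eq_imp_iff₂, restrictNormalHom_apply_eq_self_iff]
  refine ⟨fun hP c hc => ?_, fun h => ?_⟩
  · have hc' := (hfixed c).mpr hc
    rwa [hP, IsGalois.fixedField_top, mem_bot] at hc'
  · have hbot : fixedField (P.map (E.restrictNormalHom K)) = ⊥ :=
      eq_bot_iff.mpr fun c hc => mem_bot.mpr (h c ((hfixed c).mp hc))
    rw [← fixingSubgroup_fixedField (P.map _), hbot, fixingSubgroup_bot]

end restrictNormalHom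

end IntermediateField

open Module TensorProduct in
theorem Algebra.TensorProduct.productLeftAlgHom_bijective_of_finrank_prime
    {k A K F : Type*} [Field k] [Field A] [Field K] [Field F]
    [Algebra k A] [Algebra k K] [Algebra k F] [Algebra A F] [Algebra K F]
    [IsScalarTower k A F] [IsScalarTower k K F] [FiniteDimensional A F]
    (hp : (finrank A F).Prime) (hKF : finrank k K = finrank A F)
    (hdisj : ∀ c : K, algebraMap K F c ∈ (algebraMap A F).range → c ∈ (algebraMap k K).range) :
    Function.Bijective
      (productLeftAlgHom (Algebra.ofId A F) (IsScalarTower.toAlgHom k K F)) := by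
  set φ := productLeftAlgHom (Algebra.ofId A F) (IsScalarTower.toAlgHom k K F)
  have : FiniteDimensional k K := Module.finite_of_finrank_pos (hKF ▸ hp.pos)
  set R := IntermediateField.adjoin A (Set.range (algebraMap K F))
  have hR : R = ⊤ := by
    have hdvd : finrank A R ∣ finrank A F := ⟨_, (finrank_mul_finrank A R F).symm⟩
    rcases hp.eq_one_or_self_of_dvd _ hdvd with hR | hR
    · refine absurd ?_ hp.ne_one
      rw [IntermediateField.finrank_eq_one_iff] at hR
      have hsurj : Function.Surjective (algebraMap k K) := fun c =>
        hdisj c (IntermediateField.mem_bot.mp (hR ▸ IntermediateField.subset_adjoin _ _ ⟨c, rfl⟩))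
      rw [← hKF, ← (LinearEquiv.ofBijective (Algebra.linearMap k K)
        ⟨(algebraMap k K).injective, hsurj⟩).finrank_eq, finrank_self]
    · rw [← IntermediateField.finrank_eq_one_iff_eq_top]
      have := finrank_mul_finrank A R F
      rwa [hR, Nat.mul_eq_left hp.ne_zero] at this
  have hsurj : Function.Surjective φ := by
    have hle : R.toSubalgebra ≤ φ.range := by
      rw [IntermediateField.adjoin_toSubalgebra_of_isAlgebraic
        fun x _ => Algebra.IsAlgebraic.isAlgebraic x, Algebra.adjoin_le_iff]
      rintro _ ⟨c, rfl⟩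
      exact ⟨1 ⊗ₜ c, by simp [φ]⟩
    rw [hR, IntermediateField.top_toSubalgebra, top_le_iff] at hle
    exact (AlgHom.range_eq_top φ).mp hle
  have hdim : finrank A (A ⊗[k] K) = finrank A F := by rw [finrank_baseChange, hKF]
  exact ⟨(LinearMap.injective_iff_surjective_of_finrank_eq_finrank hdim
    (f := φ.toLinearMap)).mpr hsurj, hsurj⟩

theorem stmt_1_general
    (k K F : Type) [Field k] [Field K] [Field F]
    [Algebra k K] [Algebra k F] [Algebra K F] [IsScalarTower k K F]
    [FiniteDimensional k K] [IsGalois k K]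
    (x : F) (hx : Transcendental K x)
    (hFfin : FiniteDimensional (↥(adjoin K {x})) F)
    (hconstF : ∀ y : F, IsAlgebraic K y → ∃ c : K, algebraMap K F c = y)
    [IsGalois (↥(adjoin k {x})) F]
    (p : ℕ) (hp : p.Prime) (hΓ : Nat.card (K ≃ₐ[k] K) = p)
    (m : ℕ) (hG : Nat.card (F ≃ₐ[↥(adjoin K {x})] F) = m) (hm : Nat.gcd m p = 1) :
    ∃ F' : IntermediateField (↥(adjoin k {x})) F,
      FiniteDimensional (↥(adjoin k {x})) (↥F') ∧
      (∀ y : F, y ∈ F' → IsAlgebraic k y → ∃ c : k, algebraMap k F c = y) ∧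
      Nonempty (F ≃ₐ[k] TensorProduct k (↥F') K) := by
  have : FiniteDimensional k⟮x⟯ F := finiteDimensional_adjoin_of_finiteDimensional_adjoin_s1 (K := K) _
  have hπ : Function.Surjective ((k⟮x⟯).restrictNormalHom K) := by
    rw [← MonoidHom.range_eq_top, MonoidHom.range_eq_map, map_restrictNormalHom_eq_top_iff]
    intro c hc
    rw [IsGalois.fixedField_top, mem_bot] at hc
    obtain ⟨e, he⟩ := hc
    exact mem_range_algebraMap_of_algebraMap_mem_adjoin_simple hx (he ▸ e.2)
  obtain ⟨P, hPmap, hPcard⟩ := Subgroup.exists_map_eq_top_and_card_eq_of_coprime hπ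
    (by rwa [card_ker_restrictNormalHom, hG, hΓ])
  have hAK := ((k⟮x⟯).map_restrictNormalHom_eq_top_iff P).mp hPmap
  have hAF : Module.finrank (fixedField P) F = p := by
    rw [finrank_fixedField_eq_card, hPcard, hΓ]
  have hφ := Algebra.TensorProduct.productLeftAlgHom_bijective_of_finrank_prime (hAF ▸ hp)
    (by rw [hAF, ← hΓ, IsGalois.card_aut_eq_finrank]) (fun c ⟨a, ha⟩ => hAK c (ha ▸ a.2))
  refine ⟨fixedField P, inferInstance, fun y hy hyk => ?_,
    ⟨((AlgEquiv.ofBijective _ hφ).restrictScalars k).symm⟩⟩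
  obtain ⟨c, rfl⟩ := hconstF y (hyk.tower_top K)
  obtain ⟨a, rfl⟩ := hAK c hy
  exact ⟨a, IsScalarTower.algebraMap_apply k K F a⟩

/-- `k` perfect, `K/k` finite Galois, `F/K` an algebraic function field
of one variable with full constant field `K`, `x ∈ F` transcendental over `K`.
If `F/k(x)` is an abelian Galois extension, `Γ = Gal(K/k)` is cyclic of prime order `p`
and `G = Gal(F/K(x))` has order `m` with `gcd(m,p) = 1`, then the descent of the
definition field of `F` from `K` to `k` is possible: there is a finite extension
`F'` of `k(x)` with full constant field `k` such that `F ≅ F' ⊗_k K` as `k`-algebras. -/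
theorem stmt_1
    (k K F : Type) [Field k] [Field K] [Field F]
    [Algebra k K] [Algebra k F] [Algebra K F] [IsScalarTower k K F]
    [PerfectField k] [FiniteDimensional k K] [IsGalois k K]
    (x : F) (hx : Transcendental K x)
    (hFfin : FiniteDimensional (↥(adjoin K {x})) F)
    (hconstF : ∀ y : F, IsAlgebraic K y → ∃ c : K, algebraMap K F c = y)
    [IsGalois (↥(adjoin k {x})) F]
    (hab : ∀ a b : F ≃ₐ[↥(adjoin k {x})] F, a * b = b * a)
    (p : ℕ) (hp : p.Prime) [IsCyclic (K ≃ₐ[k] K)] (hΓ : Nat.card (K ≃ₐ[k] K) = p)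
    (m : ℕ) (hG : Nat.card (F ≃ₐ[↥(adjoin K {x})] F) = m) (hm : Nat.gcd m p = 1) :
    ∃ F' : IntermediateField (↥(adjoin k {x})) F,
      FiniteDimensional (↥(adjoin k {x})) (↥F') ∧
      (∀ y : F, y ∈ F' → IsAlgebraic k y → ∃ c : k, algebraMap k F c = y) ∧
      Nonempty (F ≃ₐ[k] TensorProduct k (↥F') K) :=
  stmt_1_general k K F x hx hFfin hconstF p hp hΓ m hG hm
end

section
/- Set q = p^n a prime power, let 𝒫 ⊂ F_{q²} be the set of roots of T^q + T, fix an F_p-basis (w₁, …, w_n) of 𝒫, and for 1 ≤ j < n set H_j = ⟨w₁, …, w_j⟩_{F_p} and P_j(T) = ∏_{a ∈ H_j}(T − a). Then for all 1 < j < n one has P_j(T) = P_{j−1}(T)^p − W_j · P_{j−1}(T), where W_j = P_{j−1}(w_j)^{p−1} = ∏_{a ∈ H_{j−1}}(w_j − a)^{p−1}; moreover W_j ∈ F_q (i.e. W_j^q = W_j). -/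
/-!
For a finite additive subgroup `G` of a domain, `P_G(T) = ∏_{a ∈ G} (T - a)` is additive:
`P_G(T + y) - P_G(T)` has degree `< |G|` and takes the constant value `P_G(y)` on `G`. In
characteristic `p` it is therefore `𝔽_p`-linear, so for `ω ∉ V` and `θ = P_V(ω)` every
`a + cω ∈ V + 𝔽_p ω` is sent by `P_V` to `cθ`, a root of `Y^p - θ^{p-1} Y`. Hence
`P_V^p - θ^{p-1} P_V` and `P_{V + 𝔽_p ω}` are monic of degree `p |V|` and agree on
`V + 𝔽_p ω`, so they coincide. Finally, if `ω` and all of `V` lie in `ker(x ↦ x^q + x)`, then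
`θ^q = ±θ`, and `(±1)^{p-1} = 1` in characteristic `p` gives `(θ^{p-1})^q = θ^{p-1}`.
-/

open Polynomial

theorem Polynomial.eq_of_monic_of_natDegree_eq_card {R : Type*} [CommRing R] [IsDomain R]
    {s : Set R} (hs : s.Finite) {f g : R[X]} (hf : f.Monic) (hg : g.Monic)
    (hfd : f.natDegree = Nat.card s) (hgd : g.natDegree = Nat.card s)
    (h : ∀ a ∈ s, f.eval a = g.eval a) : f = g := by
  rw [Nat.card_eq_card_finite_toFinset hs] at hfd hgd
  refine eq_of_degree_sub_lt_of_eval_finset_eq hs.toFinset ?_ fun a ha =>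
    h a (hs.mem_toFinset.mp ha)
  have hd : f.degree = g.degree := by
    rw [degree_eq_natDegree hf.ne_zero, degree_eq_natDegree hg.ne_zero, hfd, hgd]
  calc (f - g).degree < f.degree :=
        degree_sub_lt_left hd hf.ne_zero (by rw [hf.leadingCoeff, hg.leadingCoeff])
    _ = hs.toFinset.card := by rw [degree_eq_natDegree hf.ne_zero, hfd]

theorem Polynomial.natDegree_C_mul_lt_natDegree_pow {R : Type*} [Semiring R] [NoZeroDivisors R]
    {f : R[X]} (hf : 0 < f.natDegree) {n : ℕ} (hn : 1 < n) (t : R) :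
    (C t * f).natDegree < (f ^ n).natDegree := by
  rw [natDegree_pow]
  calc (C t * f).natDegree ≤ f.natDegree := natDegree_C_mul_le t f
    _ < n * f.natDegree := lt_mul_left hf hn

theorem Submodule.natCard_sup_span_singleton {F M : Type*} [DivisionRing F] [AddCommGroup M]
    [Module F M] [Module.Finite F M] {V : Submodule F M} {v : M} (hv : v ∉ V) :
    Nat.card ↥(V ⊔ span F {v}) = Nat.card F * Nat.card V := by
  rw [Module.natCard_eq_pow_finrank (K := F) (V := ↥(V ⊔ span F {v})),
    Module.natCard_eq_pow_finrank (K := F) (V := V), finrank_sup_span_singleton hv, pow_succ,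
    mul_comm]

section VanishingPoly

variable {R : Type*} [CommRing R]

noncomputable def vanishingPoly (s : Set R) (hs : s.Finite) : R[X] :=
  ∏ a ∈ hs.toFinset, (X - C a)

variable {s : Set R} (hs : s.Finite)

theorem vanishingPoly_monic : (vanishingPoly s hs).Monic :=
  monic_prod_of_monic _ _ fun a _ => monic_X_sub_C a

theorem natDegree_vanishingPoly [Nontrivial R] :
    (vanishingPoly s hs).natDegree = Nat.card s := by
  rw [vanishingPoly, natDegree_prod_of_monic _ _ fun a _ => monic_X_sub_C a]
  simp [Nat.card_eq_card_finite_toFinset hs]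

theorem eval_vanishingPoly (x : R) :
    (vanishingPoly s hs).eval x = ∏ a ∈ hs.toFinset, (x - a) := by
  simp [vanishingPoly, eval_prod]

theorem eval_vanishingPoly_of_mem {a : R} (ha : a ∈ s) : (vanishingPoly s hs).eval a = 0 := by
  rw [eval_vanishingPoly]
  exact Finset.prod_eq_zero (hs.mem_toFinset.mpr ha) (sub_self a)

theorem eval_vanishingPoly_pow_char_pow {p : ℕ} [Fact p.Prime] [CharP R p] (n : ℕ) {x : R}
    (hx : x ^ p ^ n = -x) (hs' : ∀ a ∈ s, a ^ p ^ n = -a) :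
    (vanishingPoly s hs).eval x ^ p ^ n =
      (-1) ^ hs.toFinset.card * (vanishingPoly s hs).eval x := by
  rw [eval_vanishingPoly, ← Finset.prod_pow, ← Finset.prod_neg]
  refine Finset.prod_congr rfl fun a ha => ?_
  rw [sub_pow_char_pow, hx, hs' a (hs.mem_toFinset.mp ha), neg_sub_neg, neg_sub]

end VanishingPoly

section AddSubgroup

variable {R S : Type*} [CommRing R] [SetLike S R] [AddSubgroupClass S R] (G : S)
  (hG : (G : Set R).Finite)

theorem eval_vanishingPoly_add_mem (x : R) {a : R} (ha : a ∈ G) :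
    (vanishingPoly G hG).eval (x + a) = (vanishingPoly G hG).eval x := by
  simp only [eval_vanishingPoly]
  refine Finset.prod_nbij' (· - a) (· + a) ?_ ?_ ?_ ?_ ?_ <;>
    simp +contextual [sub_mem, add_mem, ha]
  intros; ring

theorem vanishingPoly_comp_X_add_C [IsDomain R] (y : R) :
    (vanishingPoly G hG).comp (X + C y) =
      vanishingPoly G hG + C ((vanishingPoly G hG).eval y) := by
  have hmonic := vanishingPoly_monic hG
  have hdeg := natDegree_vanishingPoly hG
  have hcard : 0 < Nat.card (G : Set R) := @Nat.card_pos _ ⟨⟨0, zero_mem G⟩⟩ hG.to_subtype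
  refine eq_of_monic_of_natDegree_eq_card hG (hmonic.comp_X_add_C y) (hmonic.add_of_left ?_)
    (by simp [natDegree_comp, hdeg]) (by rw [natDegree_add_C, hdeg]) fun a ha => ?_
  · exact degree_C_le.trans_lt <| by
      rw [degree_eq_natDegree hmonic.ne_zero, hdeg]; exact_mod_cast hcard
  · rw [eval_comp, eval_add, eval_add, eval_X, eval_C, eval_C, add_comm,
      eval_vanishingPoly_add_mem G hG y ha, eval_vanishingPoly_of_mem hG ha, zero_add]

theorem eval_vanishingPoly_add [IsDomain R] (x y : R) :
    (vanishingPoly G hG).eval (x + y) =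
      (vanishingPoly G hG).eval x + (vanishingPoly G hG).eval y := by
  simpa [eval_comp] using congrArg (eval x) (vanishingPoly_comp_X_add_C G hG y)

end AddSubgroup

section ZModSubspace

variable {p : ℕ} [Fact p.Prime] {R : Type*} [CommRing R] [IsDomain R] [Algebra (ZMod p) R]

theorem eval_vanishingPoly_smul (V : Submodule (ZMod p) R) (hV : (V : Set R).Finite)
    (c : ZMod p) (x : R) :
    (vanishingPoly V hV).eval (c • x) = c • (vanishingPoly V hV).eval x := by
  let f : R →+ R :=
    { toFun := (vanishingPoly V hV).eval
      map_zero' := eval_vanishingPoly_of_mem hV V.zero_mem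
      map_add' := eval_vanishingPoly_add V hV }
  rw [← ZMod.natCast_zmod_val c, Nat.cast_smul_eq_nsmul, Nat.cast_smul_eq_nsmul]
  exact map_nsmul f c.val x

theorem vanishingPoly_sup_span_singleton [Finite R] (V : Submodule (ZMod p) R) {ω : R}
    (hω : ω ∉ V) :
    vanishingPoly (V ⊔ Submodule.span (ZMod p) {ω} : Submodule (ZMod p) R) (Set.toFinite _) =
      vanishingPoly V (Set.toFinite _) ^ p -
        C ((vanishingPoly V (Set.toFinite _)).eval ω ^ (p - 1)) *
          vanishingPoly V (Set.toFinite _) := by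
  set P := vanishingPoly (V : Set R) (Set.toFinite _)
  set θ := P.eval ω
  have hp := (Fact.out : p.Prime)
  have hdeg : P.natDegree = Nat.card V := natDegree_vanishingPoly _
  have hlt := natDegree_C_mul_lt_natDegree_pow (hdeg ▸ Nat.card_pos) hp.one_lt (θ ^ (p - 1))
  have hroot (c : ZMod p) : (c • θ) ^ p - θ ^ (p - 1) * (c • θ) = 0 := by
    rw [_root_.smul_pow, ZMod.pow_card, mul_smul_comm, pow_sub_one_mul hp.ne_zero, sub_self]
  symm
  refine eq_of_monic_of_natDegree_eq_card (Set.toFinite _)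
    (((vanishingPoly_monic _).pow p).sub_of_left (degree_lt_degree hlt))
    (vanishingPoly_monic _) ?_ (natDegree_vanishingPoly _) fun w hw => ?_
  · have hcard := Submodule.natCard_sup_span_singleton hω
    rw [Nat.card_zmod] at hcard
    rw [natDegree_sub_eq_left_of_natDegree_lt hlt, natDegree_pow, hdeg]
    exact hcard.symm
  · rw [eval_vanishingPoly_of_mem _ hw]
    obtain ⟨a, ha, b, hb, rfl⟩ := Submodule.mem_sup.mp hw
    obtain ⟨c, rfl⟩ := Submodule.mem_span_singleton.mp hb
    have hPw : P.eval (a + c • ω) = c • θ := by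
      rw [eval_vanishingPoly_add V, eval_vanishingPoly_of_mem _ ha, zero_add,
        eval_vanishingPoly_smul]
    simp only [eval_sub, eval_pow, eval_mul, eval_C, hPw, hroot]

end ZModSubspace

theorem pow_sub_one_pow_char_pow_eq_self {p : ℕ} [Fact p.Prime] {R : Type*} [CommRing R]
    [CharP R p] {t : R} (n k : ℕ) (ht : t ^ p ^ n = (-1) ^ k * t) :
    (t ^ (p - 1)) ^ p ^ n = t ^ (p - 1) := by
  have hneg : (-1 : R) ^ (p - 1) = 1 := by
    have h := pow_sub_one_mul (Fact.out : p.Prime).ne_zero (-1 : R)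
    rwa [neg_one_pow_char R p, mul_neg_one, neg_inj] at h
  rw [pow_right_comm, ht, mul_pow, pow_right_comm, hneg, one_pow, one_mul]

/-- Let `q = p^n`, `𝒫 ⊆ F_{q²}` the root set of `T^q + T`,
`(w₁,…,w_n)` an `F_p`-basis of `𝒫`, `H_j = ⟨w₁,…,w_j⟩` and
`P_j(T) = ∏_{a ∈ H_j}(T - a)`. Then for all `1 < j < n` one has
`P_j(T) = P_{j-1}(T)^p - W_j · P_{j-1}(T)` where
`W_j = P_{j-1}(w_j)^{p-1} = ∏_{a ∈ H_{j-1}}(w_j - a)^{p-1}`;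
moreover `W_j ∈ F_q`, i.e. `W_j^q = W_j`. -/
theorem stmt_10
    (p n : ℕ) (hp : p.Prime) (q : ℕ) (hq : q = p ^ n)
    (K : Type) [Field K] [Fintype K] [Algebra (ZMod p) K]
    -- `(w₁,…,w_n)` is an `F_p`-basis of the root set `𝒫` of `T^q + T`
    (w : Fin n → K) (hwroot : ∀ i, (w i) ^ q + w i = 0)
    (hwind : LinearIndependent (ZMod p) w)
    (hwspan : (Submodule.span (ZMod p) (Set.range w) : Set K) = {α : K | α ^ q + α = 0}) :
    ∀ j : ℕ, (hj1 : 1 < j) → (hjn : j < n) →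
      let Pj : Polynomial K :=
        ∏ a ∈ (Set.toFinite ((Submodule.span (ZMod p) (w '' {l : Fin n | (l : ℕ) < j}) :
          Submodule (ZMod p) K) : Set K)).toFinset, (X - C a);
      let Pj1 : Polynomial K :=
        ∏ a ∈ (Set.toFinite ((Submodule.span (ZMod p) (w '' {l : Fin n | (l : ℕ) < j - 1}) :
          Submodule (ZMod p) K) : Set K)).toFinset, (X - C a);
      let Wj : K := (Polynomial.eval (w ⟨j - 1, by omega⟩) Pj1) ^ (p - 1);
      Pj = Pj1 ^ p - C Wj * Pj1 ∧
      Wj = ∏ a ∈ (Set.toFinite ((Submodule.span (ZMod p)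
          (w '' {l : Fin n | (l : ℕ) < j - 1}) : Submodule (ZMod p) K) : Set K)).toFinset,
        (w ⟨j - 1, by omega⟩ - a) ^ (p - 1) ∧
      Wj ^ q = Wj := by
  intro j hj1 hjn Pj Pj1 Wj
  have := Fact.mk hp
  have := charP_of_injective_algebraMap (algebraMap (ZMod p) K).injective p
  set ω := w ⟨j - 1, by omega⟩
  set V := Submodule.span (ZMod p) (w '' {l : Fin n | (l : ℕ) < j - 1})
  have hidx : {l : Fin n | (l : ℕ) < j} =
      insert (⟨j - 1, by omega⟩ : Fin n) {l : Fin n | (l : ℕ) < j - 1} := by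
    ext l; simp only [Set.mem_ofPred_eq, Set.mem_insert_iff, Fin.ext_iff]; omega
  have hspan : Submodule.span (ZMod p) (w '' {l : Fin n | (l : ℕ) < j}) =
      V ⊔ Submodule.span (ZMod p) {ω} := by
    rw [hidx, Set.image_insert_eq, Submodule.span_insert, sup_comm]
  have hω : ω ∉ V := hwind.notMem_span_image (by simp)
  refine ⟨?_, ?_, ?_⟩
  · have hrec := vanishingPoly_sup_span_singleton V hω
    rw [← hspan] at hrec
    exact hrec
  · show (vanishingPoly V (Set.toFinite _)).eval ω ^ (p - 1) = _
    rw [eval_vanishingPoly, Finset.prod_pow]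
  · subst hq
    refine pow_sub_one_pow_char_pow_eq_self n _ <|
      eval_vanishingPoly_pow_char_pow _ n (eq_neg_of_add_eq_zero_left (hwroot _))
        fun a ha => eq_neg_of_add_eq_zero_left ?_
    exact hwspan.subset (Submodule.span_mono (Set.image_subset_range w _) ha)
end

section
/- Let p ≥ 3 be a prime and q = p^n. Let 𝒫 ⊂ F_{q²} be the set of roots of T^q + T (the trace-zero elements of F_{q²} over F_q), and let N_q(𝒫) = Norm_{F_{q²}/F_q}(𝒫 ∖ {0}) ⊆ F_q be the image of the nonzero elements of 𝒫 under the norm map. Then the factorization of T^q + T in F_q[T] is T^q + T = T · ∏_{a ∈ N_q(𝒫)} (T² + a), where the product runs over the distinct elements of the set N_q(𝒫), which has cardinality (q − 1)/2. -/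
open Polynomial

/-- Let `p ≥ 3` be a prime and `q = p^n`. Let `𝒫 ⊆ F_{q²}` be the set
of roots of `T^q + T` (the trace-zero elements) and `N = Norm_{F_{q²}/F_q}(𝒫 \ {0})`
(the norm being `α ↦ α^{q+1}`). Then `T^q + T = T · ∏_{a ∈ N} (T² + a)`, the product
running over the distinct elements of `N`; every `a ∈ N` lies in `F_q` (so this is a
factorization in `F_q[T]`), and `N` has cardinality `(q-1)/2`. -/
theorem stmt_15
    (p n : ℕ) (hp : p.Prime) (hp3 : 3 ≤ p) (hn : 0 < n) (q : ℕ) (hq : q = p ^ n)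
    (K : Type) [Field K] [Fintype K] [DecidableEq K] (hcardK : Fintype.card K = q ^ 2)
    (N : Finset K)
    (hN : N = Finset.image (fun α : K => α ^ (q + 1))
      ((Set.toFinite {α : K | α ^ q + α = 0}).toFinset \ {0})) :
    (X ^ q + X : Polynomial K) = X * ∏ a ∈ N, (X ^ 2 + C a) ∧
    (∀ a ∈ N, a ^ q = a) ∧
    N.card = (q - 1) / 2 := by
  classical
  haveI : Fact p.Prime := ⟨hp⟩
  have hq1 : 1 < q := by
    rw [hq]; exact Nat.one_lt_pow hn.ne' (by omega)
  have hqodd : Odd q := by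
    rw [hq]; exact (hp.odd_of_ne_two (by omega)).pow
  -- characteristic of K is p
  have hcharp : CharP K p := by
    have h0 : ((p : ℕ) : K) ^ (n * 2) = 0 := by
      have := FiniteField.cast_card_eq_zero K
      rw [hcardK, hq] at this
      push_cast at this ⊢
      rw [pow_mul]
      exact this
    have hp0 : ((p : ℕ) : K) = 0 := pow_eq_zero_iff (by positivity : n * 2 ≠ 0) |>.mp h0
    have hd : ringChar K ∣ p := ringChar.dvd hp0
    have : ringChar K = p := by
      rcases (Nat.Prime.eq_one_or_self_of_dvd hp _ hd) with h | h
      · exact absurd h (CharP.ringChar_ne_one)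
      · exact h
    rw [← this]; exact ringChar.charP K
  have h2ne : (2 : K) ≠ 0 := by
    have : ((2 : ℕ) : K) ≠ 0 := by
      rw [Ne, CharP.cast_eq_zero_iff K p 2]
      intro h
      have := Nat.le_of_dvd (by norm_num) h
      omega
    simpa using this
  set P : Finset K := (Set.toFinite {α : K | α ^ q + α = 0}).toFinset with hPdef
  have hmemP : ∀ α : K, α ∈ P ↔ α ^ q + α = 0 := fun α => by
    rw [hPdef, Set.Finite.mem_toFinset]; rfl
  set f : Polynomial K := X ^ q + X with hf
  have hfm : f.Monic := by
    apply monic_X_pow_add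
    calc degree (X : Polynomial K) = 1 := degree_X
    _ < (q : WithBot ℕ) := by exact_mod_cast hq1
  have hfdegd : f.degree = q := by
    rw [hf, degree_add_eq_left_of_degree_lt, degree_X_pow]
    rw [degree_X_pow, degree_X]
    exact_mod_cast hq1
  have hfdeg : f.natDegree = q := natDegree_eq_of_degree_eq_some hfdegd
  have hfne : f ≠ 0 := hfm.ne_zero
  -- the big polynomial
  set g : Polynomial K := X ^ (q ^ 2) - X with hg
  have hrootsg : g.roots = Finset.univ.val := by
    rw [hg, ← hcardK]
    exact FiniteField.roots_X_pow_card_sub_X K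
  have hfact : g = f * (f ^ (q - 1) - 1) := by
    have hfq : f ^ q = X ^ (q ^ 2) + X ^ q := by
      rw [hf, hq]
      rw [add_pow_char_pow, ← hq, ← pow_mul]
      congr 1
      congr 1
      ring
    have h1 : f * f ^ (q - 1) = f ^ q := by
      rw [← pow_succ']
      congr 1
      omega
    rw [mul_sub, h1, hfq, mul_one, hg, hf]
    ring
  have hgne : g ≠ 0 := by
    rw [hg]
    exact FiniteField.X_pow_card_pow_sub_X_ne_zero K (by omega) (by omega)
  have hother : f ^ (q - 1) - 1 ≠ 0 := by
    intro h
    rw [hfact, h, mul_zero] at hgne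
    exact hgne rfl
  have hrootsmul : g.roots = f.roots + (f ^ (q - 1) - 1).roots := by
    rw [hfact]; exact roots_mul (by rw [← hfact]; exact hgne)
  -- cardinality of roots of f
  have hcard_other : Multiset.card (f ^ (q - 1) - 1).roots ≤ q * (q - 1) := by
    refine (card_roots' _).trans ?_
    refine (natDegree_sub_le _ _).trans ?_
    simp [natDegree_pow, hfdeg, mul_comm]
  have hcardg : Multiset.card g.roots = q ^ 2 := by
    rw [hrootsg, ← Finset.card_def, Finset.card_univ, hcardK]
  have hcardf_le : Multiset.card f.roots ≤ q := hfdeg ▸ card_roots' f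
  have hcardf : Multiset.card f.roots = q := by
    have := congrArg Multiset.card hrootsmul
    rw [hcardg, Multiset.card_add] at this
    have hqq : q ^ 2 = q + q * (q - 1) := by
      have h1 : q - 1 + 1 = q := by omega
      calc q ^ 2 = q * (q - 1 + 1) := by rw [h1]; ring
        _ = q + q * (q - 1) := by ring
    omega
  have hnodupf : f.roots.Nodup := by
    have hle : f.roots ≤ g.roots := by rw [hrootsmul]; exact Multiset.le_add_right _ _
    have hnd : g.roots.Nodup := by rw [hrootsg]; exact Finset.univ.nodup
    exact Multiset.nodup_of_le hle hnd
  have hPfroots : P.val = f.roots := by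
    have : P = f.roots.toFinset := by
      ext α
      rw [hmemP, Multiset.mem_toFinset, mem_roots hfne, IsRoot.def, hf]
      simp
    rw [this, Multiset.toFinset_val, Multiset.dedup_eq_self.mpr hnodupf]
  have hcardP : P.card = q := by
    rw [Finset.card_def, hPfroots, hcardf]
  -- f as a product over its roots
  have hfprod : f = ∏ α ∈ P, (X - C α) := by
    have h := prod_multiset_X_sub_C_of_monic_of_roots_card_eq hfm (hcardf.trans hfdeg.symm)
    rw [Finset.prod_eq_multiset_prod, hPfroots]
    exact h.symm
  have h0P : (0 : K) ∈ P := by rw [hmemP]; simp [zero_pow (by omega : q ≠ 0)]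
  set S : Finset K := P.erase 0 with hS
  have hNS : N = S.image (fun α : K => α ^ (q + 1)) := by
    rw [hN, Finset.sdiff_singleton_eq_erase]
  have hmemS : ∀ α : K, α ∈ S ↔ α ≠ 0 ∧ α ^ q = -α := by
    intro α
    rw [hS, Finset.mem_erase, hmemP]
    constructor
    · rintro ⟨h1, h2⟩; exact ⟨h1, by linear_combination h2⟩
    · rintro ⟨h1, h2⟩; exact ⟨h1, by rw [h2]; ring⟩
  have hSneg : ∀ α : K, α ∈ S → -α ∈ S := by
    intro α hα
    rw [hmemS] at hα ⊢
    refine ⟨neg_ne_zero.mpr hα.1, ?_⟩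
    rw [hqodd.neg_pow, hα.2, neg_neg]
  have hnorm : ∀ α : K, α ∈ S → α ^ (q + 1) = -α ^ 2 := by
    intro α hα
    rw [pow_succ, ((hmemS α).mp hα).2]
    ring
  have hne_neg : ∀ α : K, α ≠ 0 → α ≠ -α := by
    intro α h0 h
    apply h0
    have : 2 * α = 0 := by linear_combination h
    rcases mul_eq_zero.mp this with h | h
    · exact absurd h h2ne
    · exact h
  -- fibers
  have hfiber : ∀ a ∈ N, ∀ α ∈ S, α ^ (q + 1) = a →
      S.filter (fun β => β ^ (q + 1) = a) = {α, -α} := by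
    intro a _ α hα hνα
    ext β
    rw [Finset.mem_filter, Finset.mem_insert, Finset.mem_singleton]
    constructor
    · rintro ⟨hβ, hνβ⟩
      have h1 : -β ^ 2 = -α ^ 2 := by rw [← hnorm β hβ, ← hnorm α hα, hνβ, hνα]
      have h2 : (β - α) * (β + α) = 0 := by linear_combination -h1
      rcases mul_eq_zero.mp h2 with h | h
      · left; exact sub_eq_zero.mp h
      · right; linear_combination h
    · rintro (rfl | rfl)
      · exact ⟨hα, hνα⟩
      · refine ⟨hSneg α hα, ?_⟩
        rw [Even.neg_pow hqodd.add_one]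
        exact hνα
  -- the three goals
  have hmaps : ∀ α ∈ S, α ^ (q + 1) ∈ N := by
    intro α hα
    rw [hNS]
    exact Finset.mem_image_of_mem _ hα
  have hfiber_prod : ∀ a ∈ N, (∏ α ∈ S.filter (fun β => β ^ (q + 1) = a), (X - C α))
      = X ^ 2 + C a := by
    intro a ha
    obtain ⟨α, hα, hνα⟩ := by rw [hNS] at ha; exact Finset.mem_image.mp ha
    rw [hfiber a ha α hα hνα]
    rw [Finset.prod_pair (hne_neg α (((hmemS α).mp hα).1))]
    have hca : C a = -(C α) ^ 2 := by
      rw [← hνα, hnorm α hα, map_neg, map_pow]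
    rw [hca, map_neg]
    ring
  refine ⟨?_, ?_, ?_⟩
  · calc (X ^ q + X : Polynomial K) = f := rfl
      _ = ∏ α ∈ P, (X - C α) := hfprod
      _ = (X - C 0) * ∏ α ∈ S, (X - C α) := by
          exact (Finset.mul_prod_erase P (fun α => X - C α) h0P).symm
      _ = X * ∏ a ∈ N, ∏ α ∈ S.filter (fun β => β ^ (q + 1) = a), (X - C α) := by
          rw [← Finset.prod_fiberwise_of_maps_to hmaps]
          simp
      _ = X * ∏ a ∈ N, (X ^ 2 + C a) := by
          congr 1
          exact Finset.prod_congr rfl hfiber_prod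
  · intro a ha
    obtain ⟨α, hα, hνα⟩ := by rw [hNS] at ha; exact Finset.mem_image.mp ha
    have hαq : α ^ q = -α := ((hmemS α).mp hα).2
    rw [← hνα, ← pow_mul, mul_comm, pow_mul, hαq, Even.neg_pow hqodd.add_one]
  · have hcardS : S.card = q - 1 := by
      rw [hS, Finset.card_erase_of_mem h0P, hcardP]
    have hsum : S.card = ∑ a ∈ N, (S.filter (fun β => β ^ (q + 1) = a)).card :=
      Finset.card_eq_sum_card_fiberwise hmaps
    have hall2 : ∀ a ∈ N, (S.filter (fun β => β ^ (q + 1) = a)).card = 2 := by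
      intro a ha
      obtain ⟨α, hα, hνα⟩ := by rw [hNS] at ha; exact Finset.mem_image.mp ha
      rw [hfiber a ha α hα hνα, Finset.card_pair (hne_neg α (((hmemS α).mp hα).1))]
    rw [Finset.sum_congr rfl hall2, Finset.sum_const, smul_eq_mul] at hsum
    obtain ⟨k, hk⟩ := hqodd
    omega
end
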